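/- arXiv:1307.1589 — 3 statements merged into one kernel-verified Lean document; each statement's English description precedes it below -/
import Mathlib

section
/- Let γ: a ↦ aca, b ↦ cab, c ↦ b, π: x ↦ ac, y ↦ ab, μ: x ↦ xy, y ↦ xxy, and x_γ the fixed point of γ starting with a. Assuming the stabilizer of the fixed point w_μ of μ is the cyclic monoid generated by μ, the stabilizer of x_γ equals {φ : there exists k ≥ 0 with φ ∘ π = γ^k ∘ π}. -/
inductive ABC : Type
  | a | b | c
  deriving DecidableEq, Inhabited, Repr

/-- The morphism γ : a ↦ aca, b ↦ cab, c ↦ b. -/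
def gam : ABC → List ABC
  | .a => [.a, .c, .a]
  | .b => [.c, .a, .b]
  | .c => [.b]

/-- The palindromes p₀ = b, p₁ = bacacab, p_{k+1} = p_k aca p_{k-1} aca p_k. -/
def pseq : ℕ → List ABC
  | 0 => [.b]
  | 1 => [.b, .a, .c, .a, .c, .a, .b]
  | (k+2) => pseq (k+1) ++ [.a, .c, .a] ++ pseq k ++ [.a, .c, .a] ++ pseq (k+1)

inductive XY : Type
  | x | y
  deriving DecidableEq, Inhabited, Repr

/-- The morphism μ : x ↦ xy, y ↦ xxy. -/
def mu : XY → List XY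
  | .x => [.x, .y]
  | .y => [.x, .x, .y]

/-- The morphism π : x ↦ ac, y ↦ ab. -/
def pim : XY → List ABC
  | .x => [.a, .c]
  | .y => [.a, .b]

/-- The prefix of length `n` of the infinite word `x`. -/
def pref {A : Type} (x : ℕ → A) (n : ℕ) : List A := (List.range n).map x

/-- The finite word `l` is a prefix of the infinite word `x`. -/
def IsPrefixOf {A : Type} [Inhabited A] (l : List A) (x : ℕ → A) : Prop :=
  ∀ i < l.length, l.getD i default = x i

/-- The image of the infinite word `w` under the morphism `f` is the infinite word `y`:
the image of every finite prefix of `w` is a prefix of `y`, and these images have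
unbounded length. -/
def InfImage {A B : Type} [Inhabited B] (f : A → List B) (w : ℕ → A) (y : ℕ → B) : Prop :=
  (∀ n, IsPrefixOf ((pref w n).flatMap f) y) ∧
  (∀ m, ∃ n, m ≤ ((pref w n).flatMap f).length)

/-- The morphism `f` fixes the infinite word `x`, i.e. `f(x) = x`. -/
def FixesWord {A : Type} [Inhabited A] (f : A → List A) (x : ℕ → A) : Prop :=
  InfImage f x x

/-- `l` is a factor of the infinite word `x`. -/
def IsFactorOf {A : Type} [Inhabited A] (l : List A) (x : ℕ → A) : Prop :=
  ∃ m, ∀ i < l.length, l.getD i default = x (m + i)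

/-- The k-th iterate of a morphism given by its letter images. -/
def iterM {A : Type} (f : A → List A) : ℕ → A → List A
  | 0 => fun α => [α]
  | k+1 => fun α => (iterM f k α).flatMap f

/-! The morphism `π` intertwines `μ` and `γ` (`γ ∘ π = π ∘ μ`), and `μ` is growing, so
`x_γ = π(w_μ)`; in particular the letter `a` occupies exactly the even positions of `x_γ`.
If `φ` fixes `x_γ`, then `φ ∘ π` maps `w_μ` onto `x_γ`, and reading the prefix `xyxxyxy` of
`w_μ` shows that `φ(π x)` and `φ(π y)` have even lengths. They are then factors of `x_γ` at
even positions, i.e. `φ ∘ π = π ∘ σ` for some morphism `σ`. As `π` is a uniform code, `σ` fixes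
`w_μ`, so `σ = μ^k` by rigidity and `φ ∘ π = π ∘ μ^k = γ^k ∘ π`. Conversely, if
`φ ∘ π = γ^k ∘ π`, then `φ(x_γ) = φ(π(w_μ)) = γ^k(π(w_μ)) = x_γ`. -/

section Words

variable {A B C : Type}

lemma pref_length (x : ℕ → A) (n : ℕ) : (pref x n).length = n := by
  simp [pref]

lemma pref_succ (x : ℕ → A) (n : ℕ) : pref x (n + 1) = pref x n ++ [x n] := by
  simp [pref, List.range_succ]

lemma pref_prefix (x : ℕ → A) {m n : ℕ} (h : m ≤ n) : pref x m <+: pref x n := by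
  induction n, h using Nat.le_induction with
  | base => exact List.prefix_refl _
  | succ n _ ih => exact ih.trans (pref_succ x n ▸ List.prefix_append _ _)

lemma le_length_flatMap {f : A → List B} {k : ℕ} (hf : ∀ a, k ≤ (f a).length) (l : List A) :
    k * l.length ≤ (l.flatMap f).length := by
  induction l with
  | nil => simp
  | cons a l ih =>
    simp only [List.flatMap_cons, List.length_append, List.length_cons]
    linarith [hf a]

lemma length_flatMap_of_uniform {f : A → List B} {d : ℕ} (hf : ∀ a, (f a).length = d)
    (l : List A) : (l.flatMap f).length = d * l.length := by
  simp [List.length_flatMap, hf, mul_comm]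

lemma flatMap_injective_of_uniform {f : A → List B} {d : ℕ} (hf : ∀ a, (f a).length = d)
    (hd : 0 < d) (hinj : Function.Injective f) : Function.Injective (List.flatMap f) := by
  intro l l' h
  have hlen : l.length = l'.length := by
    have := congrArg List.length h
    rwa [length_flatMap_of_uniform hf, length_flatMap_of_uniform hf,
      Nat.mul_left_cancel_iff hd] at this
  induction l generalizing l' with
  | nil => exact (List.length_eq_zero_iff.1 hlen.symm).symm
  | cons a l ih =>
    obtain ⟨a', l', rfl⟩ := List.exists_cons_of_length_eq_add_one hlen.symm
    obtain ⟨ha, hl⟩ := List.append_inj h (by rw [hf, hf])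
    rw [hinj ha, ih hl (by simpa using hlen)]

lemma flatMap_eq_append_of_uniform {f : A → List B} {d q : ℕ} (hf : ∀ a, (f a).length = d)
    {l : List A} {F G : List B} (h : l.flatMap f = F ++ G) (hF : F.length = d * q) :
    F = (l.take q).flatMap f ∧ G = (l.drop q).flatMap f := by
  rw [← List.take_append_drop q l, List.flatMap_append] at h
  refine List.append_inj h.symm ?_
  have hle : F.length ≤ d * l.length := by
    rw [← length_flatMap_of_uniform hf l, ← List.take_append_drop q l, List.flatMap_append, h,
      List.length_append]
    omega
  rw [length_flatMap_of_uniform hf, List.length_take, ← Nat.mul_min_mul_left, hF]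
  omega

section Prefixes

variable [Inhabited A] {x : ℕ → A} {l l' : List A}

lemma isPrefixOf_iff : IsPrefixOf l x ↔ pref x l.length = l := by
  simp only [IsPrefixOf, List.ext_getElem_iff, pref_length, true_and]
  refine forall_congr' fun i => ⟨fun h hi _ => ?_, fun h hi => ?_⟩
  · have hget := h hi
    rw [List.getD_eq_getElem _ _ hi] at hget
    simp [pref, hget]
  · have hget := h hi hi
    simp only [pref, List.getElem_map, List.getElem_range] at hget
    rw [List.getD_eq_getElem _ _ hi, hget]

lemma isPrefixOf_pref (x : ℕ → A) (n : ℕ) : IsPrefixOf (pref x n) x := by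
  rw [isPrefixOf_iff, pref_length]

lemma IsPrefixOf.of_prefix (h : l <+: l') (h' : IsPrefixOf l' x) : IsPrefixOf l x := by
  obtain ⟨t, rfl⟩ := h
  intro i hi
  rw [← h' i (by simp; omega), List.getD_append _ _ _ _ hi]

lemma IsPrefixOf.getD_append {u v : List A} (h : IsPrefixOf (u ++ v) x) {i : ℕ}
    (hi : i < v.length) : x (u.length + i) = v.getD i default := by
  rw [← h _ (by simp; omega), List.getD_append_right _ _ _ _ (by omega), Nat.add_sub_cancel_left]

end Prefixes

namespace InfImage

variable [Inhabited B] [Inhabited C] {f : A → List B} {g : B → List C}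
  {u : ℕ → A} {v : ℕ → B} {w : ℕ → C}

lemma pref_eq (h : InfImage f u v) (n : ℕ) :
    pref v ((pref u n).flatMap f).length = (pref u n).flatMap f :=
  isPrefixOf_iff.1 (h.1 n)

lemma isPrefixOf_flatMap [Inhabited A] (h : InfImage f u v) {l : List A} (hl : IsPrefixOf l u) :
    IsPrefixOf (l.flatMap f) v := by
  rw [isPrefixOf_iff] at hl
  simpa [hl] using h.1 l.length

lemma comp (hf : InfImage f u v) (hg : InfImage g v w) :
    InfImage (fun a => (f a).flatMap g) u w := by
  refine ⟨fun n => ?_, fun m => ?_⟩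
  · rw [← List.flatMap_assoc, ← hf.pref_eq n]
    exact hg.1 _
  · obtain ⟨n, hn⟩ := hg.2 m
    obtain ⟨k, hk⟩ := hf.2 n
    refine ⟨k, hn.trans ?_⟩
    rw [← List.flatMap_assoc, ← hf.pref_eq k]
    exact ((pref_prefix v hk).flatMap g).length_le

lemma of_comp (hf : InfImage f u v) (hfg : InfImage (fun a => (f a).flatMap g) u w) :
    InfImage g v w := by
  refine ⟨fun n => ?_, fun m => ?_⟩
  · obtain ⟨k, hk⟩ := hf.2 n
    refine IsPrefixOf.of_prefix ((pref_prefix v hk).flatMap g) ?_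
    rw [hf.pref_eq k, List.flatMap_assoc]
    exact hfg.1 k
  · obtain ⟨k, hk⟩ := hfg.2 m
    refine ⟨((pref u k).flatMap f).length, hk.trans_eq ?_⟩
    rw [hf.pref_eq k, List.flatMap_assoc]

lemma pref_mul_of_uniform {d : ℕ} (hf : ∀ a, (f a).length = d) (h : InfImage f u v) (n : ℕ) :
    pref v (d * n) = (pref u n).flatMap f := by
  simpa [length_flatMap_of_uniform hf, pref_length] using h.pref_eq n

lemma apply_of_uniform {d : ℕ} (hf : ∀ a, (f a).length = d) (h : InfImage f u v) (m : ℕ)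
    {j : ℕ} (hj : j < d) : v (d * m + j) = (f (u m)).getD j default := by
  have hpre := isPrefixOf_pref v (d * (m + 1))
  rw [h.pref_mul_of_uniform hf, pref_succ, List.flatMap_append, List.flatMap_singleton] at hpre
  simpa [length_flatMap_of_uniform hf, pref_length] using hpre.getD_append (hf (u m) ▸ hj)

/-- Uniformity makes `g` a prefix code: `g (f p)` being a prefix of `w = g v` forces `f p` to
be a prefix of `v`. -/
lemma of_comp_of_uniform {d : ℕ} (hg : ∀ b, (g b).length = d) (hinj : Function.Injective g)
    (hgv : InfImage g v w) (hfg : InfImage (fun a => (f a).flatMap g) u w) : InfImage f u v := by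
  have hd : 0 < d := by
    obtain ⟨n, hn⟩ := hgv.2 1
    rw [length_flatMap_of_uniform hg] at hn
    exact Nat.pos_of_mul_pos_right hn
  refine ⟨fun n => ?_, fun m => ?_⟩
  · have key := hfg.pref_eq n
    rw [← List.flatMap_assoc, length_flatMap_of_uniform hg, hgv.pref_mul_of_uniform hg] at key
    rw [← flatMap_injective_of_uniform hg hd hinj key]
    exact isPrefixOf_pref v _
  · obtain ⟨k, hk⟩ := hfg.2 (d * m)
    rw [← List.flatMap_assoc, length_flatMap_of_uniform hg] at hk
    exact ⟨k, Nat.le_of_mul_le_mul_left hk hd⟩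

end InfImage

lemma FixesWord.iterate [Inhabited A] {f : A → List A} {x : ℕ → A} (hf : FixesWord f x) :
    ∀ k, FixesWord (iterM f k) x
  | 0 => ⟨fun n => by simpa [iterM] using isPrefixOf_pref x n,
      fun m => ⟨m, by simp [iterM, pref_length]⟩⟩
  | k + 1 => InfImage.comp (hf.iterate k) hf

lemma flatMap_iterM_of_semiconj {f : B → List B} {g : A → List A} {h : B → List A}
    (hc : ∀ b, (h b).flatMap g = (f b).flatMap h) (k : ℕ) (b : B) :
    (h b).flatMap (iterM g k) = (iterM f k b).flatMap h := by
  induction k with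
  | zero => simp [iterM]
  | succ k ih =>
    simp only [iterM]
    rw [← List.flatMap_assoc, ih, List.flatMap_assoc, List.flatMap_assoc]
    simp only [hc]

/-- For a prefix `p` of `w`, `h (f p) = g (h p)` is a longer prefix of `x` whenever `h p` is
one. -/
lemma InfImage.of_semiconj [Inhabited A] [Inhabited B] {f : B → List B} {g : A → List A}
    {h : B → List A} {w : ℕ → B} {x : ℕ → A}
    (hc : ∀ b, (h b).flatMap g = (f b).flatMap h) (hf : ∀ b, 2 ≤ (f b).length)
    (hh : ∀ b, 1 ≤ (h b).length) (hw : FixesWord f w) (hx : FixesWord g x)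
    (h0 : IsPrefixOf (h (w 0)) x) : InfImage h w x := by
  have hgrowth (m : ℕ) : m ≤ ((pref w m).flatMap h).length := by
    simpa [pref_length] using le_length_flatMap hh (pref w m)
  refine ⟨fun m => ?_, fun m => ⟨m, hgrowth m⟩⟩
  induction m with
  | zero => simp [pref, IsPrefixOf]
  | succ m ih =>
    rcases Nat.eq_zero_or_pos m with rfl | hm
    · simpa [pref] using h0
    have himage : IsPrefixOf (((pref w m).flatMap f).flatMap h) x := by
      rw [List.flatMap_assoc]
      simp only [← hc]
      rw [← List.flatMap_assoc]
      exact InfImage.isPrefixOf_flatMap hx ih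
    have hlen : m + 1 ≤ ((pref w m).flatMap f).length := by
      have := le_length_flatMap hf (pref w m)
      rw [pref_length] at this
      omega
    rw [← InfImage.pref_eq hw m] at himage
    exact IsPrefixOf.of_prefix ((pref_prefix w hlen).flatMap h) himage

end Words

lemma pim_flatMap_gam (t : XY) : (pim t).flatMap gam = (mu t).flatMap pim := by
  cases t <;> rfl

lemma length_pim (t : XY) : (pim t).length = 2 := by
  cases t <;> rfl

lemma pim_injective : Function.Injective pim := by
  rintro (_ | _) (_ | _) h <;> first | rfl | cases h

section FixedPoints

variable {x : ℕ → ABC} {w : ℕ → XY}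

lemma infImage_pim (h0 : x 0 = .a) (hx : FixesWord gam x) (hw0 : w 0 = .x)
    (hw : FixesWord mu w) : InfImage pim w x := by
  refine InfImage.of_semiconj pim_flatMap_gam (by rintro (_ | _) <;> decide)
    (by simp [length_pim]) hw hx ?_
  have hγa : IsPrefixOf (gam .a) x := by
    simpa [pref, h0] using InfImage.isPrefixOf_flatMap hx (isPrefixOf_pref x 1)
  rw [hw0]
  exact hγa.of_prefix ⟨[.a], rfl⟩

lemma apply_eq_a_iff_even (hπ : InfImage pim w x) (n : ℕ) : x n = .a ↔ Even n := by
  rw [← Nat.div_add_mod n 2, hπ.apply_of_uniform length_pim _ (Nat.mod_lt n two_pos)]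
  rcases Nat.mod_two_eq_zero_or_one n with h | h <;> rw [h] <;> cases w (n / 2) <;>
    simp [pim]

lemma isPrefixOf_xyxxyxy (hw0 : w 0 = .x) (hw : FixesWord mu w) :
    IsPrefixOf [.x, .y, .x, .x, .y, .x, .y] w := by
  have hw1 : IsPrefixOf [XY.x] w := by simpa [pref, hw0] using isPrefixOf_pref w 1
  have hμ3 := InfImage.isPrefixOf_flatMap hw <| InfImage.isPrefixOf_flatMap hw <|
    InfImage.isPrefixOf_flatMap hw hw1
  exact hμ3.of_prefix ⟨[.x, .y, .x, .x, .y], rfl⟩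

/-- `f (xy)` is a nonempty prefix of `x`, so it begins with `a`; as `xy` also occurs at
positions 3 and 5 of `w`, the letter `a` sits at positions `2|f x| + |f y|` and
`3|f x| + 2|f y|` of `x`, and both must be even. -/
lemma even_length_of_infImage (hπ : InfImage pim w x)
    (hw7 : IsPrefixOf [.x, .y, .x, .x, .y, .x, .y] w) {f : XY → List ABC}
    (hf : InfImage f w x) : Even (f .x).length ∧ Even (f .y).length := by
  have hne : f .x ++ f .y ≠ [] := by
    intro hnil
    have hnil' : ∀ t, f t = [] := by rintro (_ | _) <;> simp_all
    obtain ⟨n, hn⟩ := hf.2 1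
    simp [hnil'] at hn
  have hpre := hf.isPrefixOf_flatMap hw7
  have hstart : (f .x ++ f .y).getD 0 default = ABC.a := by
    have hxy : IsPrefixOf (f .x ++ f .y) x :=
      hpre.of_prefix ⟨f .x ++ f .x ++ f .y ++ f .x ++ f .y, by simp⟩
    rw [hxy 0 (List.length_pos_iff.2 hne), apply_eq_a_iff_even hπ]
    exact ⟨0, rfl⟩
  have h3 := (hpre.of_prefix ⟨f .x ++ f .y, by simp⟩ :
    IsPrefixOf ((f .x ++ f .y ++ f .x) ++ (f .x ++ f .y)) x).getD_append
      (List.length_pos_iff.2 hne)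
  have h5 := (hpre.of_prefix ⟨[], by simp⟩ :
    IsPrefixOf ((f .x ++ f .y ++ f .x ++ f .x ++ f .y) ++ (f .x ++ f .y)) x).getD_append
      (List.length_pos_iff.2 hne)
  rw [hstart, apply_eq_a_iff_even hπ] at h3 h5
  simp only [List.length_append, Nat.add_zero, Nat.even_iff] at h3 h5 ⊢
  omega

lemma exists_eq_flatMap_pim (hπ : InfImage pim w x)
    (hw7 : IsPrefixOf [.x, .y, .x, .x, .y, .x, .y] w) {f : XY → List ABC}
    (hf : InfImage f w x) : ∃ σ : XY → List XY, ∀ t, f t = (σ t).flatMap pim := by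
  obtain ⟨⟨p, hp⟩, ⟨q, hq⟩⟩ := even_length_of_infImage hπ hw7 hf
  have hxy : IsPrefixOf (f .x ++ f .y) x := by
    simpa using hf.isPrefixOf_flatMap (hw7.of_prefix ⟨[.x, .x, .y, .x, .y], rfl⟩ :
      IsPrefixOf [XY.x, .y] w)
  have hsplit : (pref w (p + q)).flatMap pim = f .x ++ f .y := by
    rw [← hπ.pref_mul_of_uniform length_pim, ← isPrefixOf_iff.1 hxy, List.length_append, hp, hq]
    ring_nf
  obtain ⟨hfx, hfy⟩ := flatMap_eq_append_of_uniform length_pim hsplit (q := p) (by omega)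
  exact ⟨fun | .x => (pref w (p + q)).take p | .y => (pref w (p + q)).drop p,
    by rintro (_ | _) <;> assumption⟩

end FixedPoints

/-- Assuming rigidity of w_μ (every morphism fixing w_μ is a power of μ), the
stabilizer of x_γ is exactly the set of morphisms φ with φ ∘ π = γ^k ∘ π for
some k ≥ 0. -/
theorem stabilizer_x_gamma
    (x : ℕ → ABC) (h0 : x 0 = ABC.a) (hx : FixesWord gam x)
    (w : ℕ → XY) (hw0 : w 0 = XY.x) (hw : FixesWord mu w)
    (hrigid : ∀ σ : XY → List XY, FixesWord σ w → ∃ k, ∀ t, σ t = iterM mu k t) :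
    ∀ φ : ABC → List ABC,
      FixesWord φ x ↔ ∃ k : ℕ, ∀ t : XY, (pim t).flatMap φ = (pim t).flatMap (iterM gam k) := by
  intro φ
  have hπ := infImage_pim h0 hx hw0 hw
  constructor
  · intro hφ
    have hπφ := hπ.comp hφ
    obtain ⟨σ, hσ⟩ := exists_eq_flatMap_pim hπ (isPrefixOf_xyxxyxy hw0 hw) hπφ
    have hσw : FixesWord σ w := by
      refine InfImage.of_comp_of_uniform length_pim pim_injective hπ ?_
      rwa [← funext hσ]
    obtain ⟨k, hk⟩ := hrigid σ hσw
    refine ⟨k, fun t => ?_⟩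
    rw [hσ t, hk t, flatMap_iterM_of_semiconj pim_flatMap_gam]
  · rintro ⟨k, hk⟩
    refine InfImage.of_comp hπ ?_
    rw [funext hk]
    exact hπ.comp (hx.iterate k)
end

section
/- With γ: a ↦ aca, b ↦ cab, c ↦ b and p_k defined by p_0 = b, p_1 = bacacab, p_{k+1} = p_k aca p_{k-1} aca p_k, one has γ^k(ab) = aca p_{k-2} aca p_{k-1} for all k ≥ 2, and this word has a point of symmetry at |p_{k-2}| + 5. -/
lemma pseq_succ_eq (j : ℕ) :
    pseq (j+1) = [ABC.b, ABC.a, ABC.c, ABC.a] ++ (pseq j).flatMap gam := by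
  induction j using Nat.twoStepInduction with
  | zero => rfl
  | one => rfl
  | more j ih1 ih2 =>
    show pseq (j+3) = _
    have ih2' : pseq (j+2) = [ABC.b, ABC.a, ABC.c, ABC.a] ++ (pseq (j+1)).flatMap gam := ih2
    have e3 : pseq (j+3) = pseq (j+2) ++ [ABC.a, ABC.c, ABC.a] ++ pseq (j+1)
        ++ [ABC.a, ABC.c, ABC.a] ++ pseq (j+2) := rfl
    have e2 : pseq (j+2) = pseq (j+1) ++ [ABC.a, ABC.c, ABC.a] ++ pseq j
        ++ [ABC.a, ABC.c, ABC.a] ++ pseq (j+1) := rfl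
    have calc1 : [ABC.b, ABC.a, ABC.c, ABC.a] ++ (pseq (j+2)).flatMap gam
        = ([ABC.b, ABC.a, ABC.c, ABC.a] ++ (pseq (j+1)).flatMap gam)
          ++ [ABC.a, ABC.c, ABC.a]
          ++ ([ABC.b, ABC.a, ABC.c, ABC.a] ++ (pseq j).flatMap gam)
          ++ [ABC.a, ABC.c, ABC.a]
          ++ ([ABC.b, ABC.a, ABC.c, ABC.a] ++ (pseq (j+1)).flatMap gam) := by
      rw [e2]
      simp [gam, List.append_assoc]
    rw [e3, calc1, ← ih1, ← ih2']

lemma pseq_palindrome (j : ℕ) : (pseq j).reverse = pseq j := by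
  induction j using Nat.twoStepInduction with
  | zero => rfl
  | one => rfl
  | more j ih1 ih2 =>
    show (pseq (j+2)).reverse = pseq (j+2)
    have e2 : pseq (j+2) = pseq (j+1) ++ [ABC.a, ABC.c, ABC.a] ++ pseq j
        ++ [ABC.a, ABC.c, ABC.a] ++ pseq (j+1) := rfl
    rw [e2]
    simp [ih1, ih2, List.append_assoc]

/-- A word `w` of length `n` has a point of symmetry at `a` if
`w_{(a-i) mod n} = w_i` for all `0 ≤ i ≤ n-1`. -/
def PointOfSymmetry {A : Type} [Inhabited A] (w : List A) (a : ℕ) : Prop :=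
  ∀ i < w.length,
    w.getD ((((a : ℤ) - (i : ℤ)) % (w.length : ℤ)).toNat) default = w.getD i default

lemma palin_getD {A : Type} [Inhabited A] (u : List A) (hu : u.reverse = u)
    (i : ℕ) (h : i < u.length) :
    u.getD (u.length - 1 - i) default = u.getD i default := by
  rw [List.getD_eq_getElem _ _ (by omega), List.getD_eq_getElem _ _ h]
  rw [List.getElem_of_eq hu.symm h, List.getElem_reverse]

lemma pos_append {A : Type} [Inhabited A] (u v : List A) (hu : u.reverse = u)
    (hv : v.reverse = v) (h1 : 1 ≤ u.length) :
    PointOfSymmetry (u ++ v) (u.length - 1) := by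
  intro i hi
  rw [List.length_append] at hi
  rcases lt_or_ge i u.length with h | h
  · have hmod : ((↑(u.length - 1) : ℤ) - ↑i) % ↑((u ++ v).length)
        = (↑(u.length - 1) : ℤ) - ↑i :=
      Int.emod_eq_of_lt (by omega) (by rw [List.length_append]; push_cast; omega)
    rw [hmod]
    have ht : ((↑(u.length - 1) : ℤ) - ↑i).toNat = u.length - 1 - i := by omega
    rw [ht, List.getD_append _ _ _ _ (by omega), List.getD_append _ _ _ _ h]
    exact palin_getD u hu i h
  · have hmod : ((↑(u.length - 1) : ℤ) - ↑i) % ↑((u ++ v).length)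
        = ((2 * u.length + v.length - 1 - i : ℕ) : ℤ) := by
      rw [List.length_append]
      rw [show ((↑(u.length - 1) : ℤ) - ↑i)
          = ((2 * u.length + v.length - 1 - i : ℕ) : ℤ) - ((u.length + v.length : ℕ) : ℤ) by
        push_cast; omega]
      rw [Int.sub_emod, Int.emod_self, sub_zero, Int.emod_emod_of_dvd _ dvd_rfl]
      exact Int.emod_eq_of_lt (by omega) (by push_cast; omega)
    rw [hmod, Int.toNat_natCast]
    rw [List.getD_append_right _ _ _ _ (by omega), List.getD_append_right _ _ _ _ h,
      List.length_append] at *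
    have := palin_getD v hv (i - u.length) (by omega)
    rw [show 2 * u.length + v.length - 1 - i - u.length
        = v.length - 1 - (i - u.length) by omega]
    exact this

lemma main_formula (j : ℕ) :
    [ABC.a, ABC.b].flatMap (iterM gam (j+2))
      = [ABC.a, ABC.c, ABC.a] ++ pseq j ++ [ABC.a, ABC.c, ABC.a] ++ pseq (j+1) := by
  induction j with
  | zero => rfl
  | succ j ih =>
    have step : [ABC.a, ABC.b].flatMap (iterM gam (j+3))
        = ([ABC.a, ABC.b].flatMap (iterM gam (j+2))).flatMap gam := by
      simp only [List.flatMap_cons, List.flatMap_nil, List.flatMap_append]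
      rfl
    have calc1 : ([ABC.a, ABC.c, ABC.a] ++ pseq j ++ [ABC.a, ABC.c, ABC.a]
          ++ pseq (j+1)).flatMap gam
        = [ABC.a, ABC.c, ABC.a] ++ ([ABC.b, ABC.a, ABC.c, ABC.a] ++ (pseq j).flatMap gam)
          ++ [ABC.a, ABC.c, ABC.a]
          ++ ([ABC.b, ABC.a, ABC.c, ABC.a] ++ (pseq (j+1)).flatMap gam) := by
      simp [gam, List.append_assoc]
    rw [step, ih, calc1, ← pseq_succ_eq, ← pseq_succ_eq]

/-- γ^k(ab) = aca p_{k-2} aca p_{k-1} for all k ≥ 2, and this word has a point of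
symmetry at |p_{k-2}| + 5. -/
theorem gamma_pow_ab : ∀ k : ℕ, 2 ≤ k →
    [ABC.a, ABC.b].flatMap (iterM gam k)
      = [ABC.a, ABC.c, ABC.a] ++ pseq (k-2) ++ [ABC.a, ABC.c, ABC.a] ++ pseq (k-1) ∧
    PointOfSymmetry ([ABC.a, ABC.b].flatMap (iterM gam k)) ((pseq (k-2)).length + 5) := by
  intro k hk
  obtain ⟨j, rfl⟩ : ∃ j, k = j + 2 := ⟨k - 2, by omega⟩
  have h2 : j + 2 - 2 = j := by omega
  have h1 : j + 2 - 1 = j + 1 := by omega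
  rw [h2, h1, main_formula]
  refine ⟨rfl, ?_⟩
  have hX : ([ABC.a, ABC.c, ABC.a] ++ pseq j ++ [ABC.a, ABC.c, ABC.a]).reverse
      = [ABC.a, ABC.c, ABC.a] ++ pseq j ++ [ABC.a, ABC.c, ABC.a] := by
    simp [pseq_palindrome, List.append_assoc]
  have hlen : (pseq j).length + 5
      = ([ABC.a, ABC.c, ABC.a] ++ pseq j ++ [ABC.a, ABC.c, ABC.a]).length - 1 := by
    simp
  rw [hlen, List.append_assoc, List.append_assoc, ← List.append_assoc, ← List.append_assoc]
  exact pos_append _ _ hX (pseq_palindrome (j+1)) (by simp)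
end

section
/- With γ: a ↦ aca, b ↦ cab, c ↦ b and p_k as above, γ^k(ac) = aca p_{k-1} for all k ≥ 1, and this word has a point of symmetry at 2. -/
lemma pseq_pal : ∀ k, (pseq k).reverse = pseq k := by
  intro k
  induction k using Nat.strong_induction_on with
  | _ k ih =>
    match k with
    | 0 => decide
    | 1 => decide
    | (k+2) =>
      simp [pseq, List.reverse_append, ih k (by omega), ih (k+1) (by omega),
        List.append_assoc]

lemma gamQ : ∀ k, [ABC.b, ABC.a, ABC.c, ABC.a] ++ (pseq k).flatMap gam = pseq (k+1) := by
  intro k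
  induction k using Nat.strong_induction_on with
  | _ k ih =>
    match k with
    | 0 => decide
    | 1 => decide
    | (k+2) =>
      have h1 := ih k (by omega)
      have h2 := ih (k+1) (by omega)
      show [ABC.b, ABC.a, ABC.c, ABC.a] ++ (pseq (k+2)).flatMap gam = pseq (k+3)
      rw [show pseq (k+2) = pseq (k+1) ++ [.a, .c, .a] ++ pseq k ++ [.a, .c, .a] ++ pseq (k+1) from rfl,
        show pseq (k+3) = pseq (k+2) ++ [.a, .c, .a] ++ pseq (k+1) ++ [.a, .c, .a] ++ pseq (k+2) from rfl]
      simp only [List.flatMap_append]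
      set P := (pseq k).flatMap gam with hP
      set Q := (pseq (k+1)).flatMap gam with hQ
      rw [← h1, ← h2]
      simp [gam, List.flatMap, List.append_assoc]

lemma gamPow : ∀ k, [ABC.a, ABC.c].flatMap (iterM gam (k+1)) = [ABC.a, ABC.c, ABC.a] ++ pseq k := by
  intro k
  induction k with
  | zero => decide
  | succ k ih =>
    have h : [ABC.a, ABC.c].flatMap (iterM gam (k+2))
        = ([ABC.a, ABC.c].flatMap (iterM gam (k+1))).flatMap gam := by
      simp [iterM, List.flatMap_append]
    rw [h, ih]
    simp only [List.flatMap_append]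
    set P := (pseq k).flatMap gam with hP
    rw [show pseq (k+1) = pseq (k+1) from rfl, ← gamQ k]
    simp [gam, List.flatMap, List.append_assoc]
    rfl

lemma pal_getD (p : List ABC) (hp : p.reverse = p) (m : ℕ) (hm : m < p.length) :
    p.getD (p.length - 1 - m) default = p.getD m default := by
  have h1 : p.length - 1 - m < p.length := by omega
  rw [List.getD_eq_getElem _ _ h1]
  conv_rhs => rw [← hp]
  rw [List.getD_eq_getElem _ _ (by simpa using hm), List.getElem_reverse]

lemma pos_aca (p : List ABC) (hp : p.reverse = p) :
    PointOfSymmetry ([ABC.a, ABC.c, ABC.a] ++ p) 2 := by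
  intro i hi
  set w := [ABC.a, ABC.c, ABC.a] ++ p with hw
  have hlen : w.length = p.length + 3 := by simp [hw]
  rw [hlen] at hi ⊢
  simp only [Nat.cast_ofNat]
  by_cases h3 : i < 3
  · have h2 : ((2:ℤ) - i) % (p.length + 3 : ℕ) = 2 - i := by
      apply Int.emod_eq_of_lt <;> omega
    rw [h2]
    interval_cases i <;> simp [hw, List.getD]
  · -- i ≥ 3
    have h2 : ((2:ℤ) - i) % (p.length + 3 : ℕ) = (p.length + 3 : ℕ) + 2 - i := by
      have : ((2:ℤ) - i) % (p.length + 3 : ℕ)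
          = ((2:ℤ) - i + (p.length + 3 : ℕ)) % (p.length + 3 : ℕ) := by
        simp [Int.add_emod]
      rw [this]
      rw [Int.emod_eq_of_lt (by push_cast; omega) (by push_cast; omega)]
      ring
    rw [h2]
    have hj : ((p.length + 3 : ℕ) + 2 - (i:ℤ)).toNat = (p.length - 1 - (i - 3)) + 3 := by
      push_cast; omega
    rw [hj]
    obtain ⟨m, rfl⟩ : ∃ m, i = m + 3 := ⟨i - 3, by omega⟩
    have hm : m < p.length := by omega
    show w.getD ((p.length - 1 - m) + 3) default = w.getD (m + 3) default
    simp only [hw, List.cons_append, List.nil_append, show ∀ n:ℕ, n + 3 = n.succ.succ.succ from fun n => rfl, List.getD_cons_succ]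
    exact pal_getD p hp m hm

/-- γ^k(ac) = aca p_{k-1} for all k ≥ 1, and this word has a point of symmetry at 2. -/
theorem gamma_pow_ac : ∀ k : ℕ, 1 ≤ k →
    [ABC.a, ABC.c].flatMap (iterM gam k) = [ABC.a, ABC.c, ABC.a] ++ pseq (k-1) ∧
    PointOfSymmetry ([ABC.a, ABC.c].flatMap (iterM gam k)) 2 := by
  intro k hk
  obtain ⟨m, rfl⟩ : ∃ m, k = m + 1 := ⟨k - 1, by omega⟩
  have h := gamPow m
  exact ⟨h, by rw [h]; exact pos_aca (pseq m) (pseq_pal m)⟩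
end
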